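/- Let m be an even positive integer. Then GL_m(ℤ) is generated by the two matrices X and P, where X is the permutation matrix of the m-cycle (entries X_{i,j} = 1 exactly when i ≡ j+1 mod m, i.e., row 1 has a 1 in column m and row k has a 1 in column k−1 for 2 ≤ k ≤ m, all other entries 0) and P = I_m + E_{12} is the identity matrix with an extra 1 in position (1,2). -/

import Mathlib

/-!
Conjugating `P = 1 + E₁₂` by the powers of the `m`-cycle `X` gives every `1 + E_{i,i+1}`, and the
commutator identity `⁅1 + E_{ij}, 1 + E_{jk}⁆ = 1 + E_{ik}` then gives every elementary
transvection. Over `ℤ` these generate `SL_m(ℤ)`: if `A ∈ SL_m(ℤ)` fixes `e_k` for all `k ∉ S` and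
`p ∈ S`, the Euclidean algorithm on the entries of `A e_p` indexed by `S` (row operations between
rows of `S`) leaves a single unit entry, which transvections move to `e_p` without disturbing the
`e_k`, `k ∉ S`; so `A` can be made to fix `e_p` as well. Finally `det X = -1` since `m` is even, so
`X` and `SL_m(ℤ)` generate `GL_m(ℤ)`.
-/

open Matrix MatrixGroups
open scoped commutatorElement

theorem exists_isUnit_of_sum_mul_eq_one {ι R : Type*} [CommRing R] [Nontrivial R] {S : Finset ι}
    {w c : ι → R}
    (hw : {i | i ∈ S ∧ w i ≠ 0}.Subsingleton) (hc : ∑ k ∈ S, c k * w k = 1) :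
    ∃ r ∈ S, IsUnit (w r) := by
  obtain ⟨r, hr, hcr⟩ := Finset.exists_ne_zero_of_sum_ne_zero (hc ▸ one_ne_zero)
  have hwr : w r ≠ 0 := right_ne_zero_of_mul hcr
  rw [Finset.sum_eq_single_of_mem r hr fun k hk hkr => by
    rw [show w k = 0 from by_contra fun h => hkr (hw ⟨hk, h⟩ ⟨hr, hwr⟩), mul_zero]] at hc
  exact ⟨r, hr, IsUnit.of_mul_eq_one_right _ hc⟩

namespace Matrix.SpecialLinearGroup

variable {n : Type*} [Fintype n] [DecidableEq n]

section CommRing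

variable {R : Type*} [CommRing R]

lemma transvection_smul {i j : n} (hij : i ≠ j) (c : R) (v : n → R) :
    transvection hij c • v = v + Pi.single i (c * v j) := by
  ext k
  simp [SpecialLinearGroup.smul_def, transvection_coe, add_mulVec, single_mulVec_eq,
    Pi.single_apply]

lemma transvection_commutator {i j k : n} (hij : i ≠ j) (hjk : j ≠ k) (hik : i ≠ k) (a b : R) :
    ⁅transvection hij a, transvection hjk b⁆ = transvection hik (a * b) := by
  refine Subtype.ext ?_
  simp only [commutatorElement_def, transvection_inv, coe_mul, transvection_coe, add_mul,
    mul_add, one_mul, mul_one, single_mul_single_same, single_mul_single_of_ne _ _ _ _ hij.symm,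
    single_mul_single_of_ne _ _ _ _ hjk.symm, single_mul_single_of_ne _ _ _ _ hik.symm,
    add_zero, mul_neg, neg_mul, ← single_neg]
  abel

lemma eq_one_of_smul_single {A : SpecialLinearGroup n R}
    (hA : ∀ k, A • (Pi.single k 1 : n → R) = Pi.single k 1) : A = 1 := by
  ext i j
  simpa [SpecialLinearGroup.smul_def, mulVec_single_one, one_apply, Pi.single_apply, eq_comm]
    using congrFun (hA j) i

lemma smul_single_apply_eq_one {A : SpecialLinearGroup n R} {p : n}
    (hA : ∀ k ≠ p, A • (Pi.single k 1 : n → R) = Pi.single k 1) :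
    (A • (Pi.single p 1 : n → R)) p = 1 := by
  set v : n → R := A • Pi.single p 1
  have hcol : (A : Matrix n n R) = updateCol 1 p v := by
    ext i j
    have hAj : A i j = (A • (Pi.single j 1 : n → R)) i := by
      simp [SpecialLinearGroup.smul_def]
    rcases eq_or_ne j p with rfl | hj
    · simp [hAj, v]
    · simp [hAj, hA j hj, hj, one_apply, Pi.single_apply]
  have hdet := det_updateCol_sum (1 : Matrix n n R) p v
  simp only [smul_eq_mul, one_apply, mul_ite, mul_one, mul_zero, Finset.sum_ite_eq,
    Finset.mem_univ, if_true, det_one] at hdet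
  rw [← hdet, ← hcol, A.2]

variable (n R) in
def elementarySubgroup : Subgroup (SpecialLinearGroup n R) :=
  Subgroup.closure (Set.range TransvectionStruct.toSpecialLinearGroup)

lemma transvection_mem_elementarySubgroup {i j : n} (hij : i ≠ j) (c : R) :
    transvection hij c ∈ elementarySubgroup n R :=
  Subgroup.subset_closure ⟨⟨i, j, hij, c⟩, rfl⟩

variable (R) in
def elementarySubgroupOn (S : Finset n) : Subgroup (SpecialLinearGroup n R) :=
  elementarySubgroup n R ⊓ fixingSubgroup _ {v : n → R | ∃ k ∉ S, Pi.single k 1 = v}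

lemma elementarySubgroupOn_le (S : Finset n) :
    elementarySubgroupOn R S ≤ elementarySubgroup n R :=
  inf_le_left (b := fixingSubgroup _ _)

lemma smul_single_of_mem_elementarySubgroupOn {S : Finset n} {g : SpecialLinearGroup n R}
    (hg : g ∈ elementarySubgroupOn R S) {k : n} (hk : k ∉ S) :
    g • (Pi.single k 1 : n → R) = Pi.single k 1 :=
  (mem_fixingSubgroup_iff _).1 (Subgroup.mem_inf.1 hg).2 _ ⟨k, hk, rfl⟩

lemma transvection_mem_elementarySubgroupOn {S : Finset n} {i j : n} (hij : i ≠ j) (hj : j ∈ S)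
    (c : R) : transvection hij c ∈ elementarySubgroupOn R S := by
  refine Subgroup.mem_inf.2 ⟨transvection_mem_elementarySubgroup hij c,
    (mem_fixingSubgroup_iff _).2 ?_⟩
  rintro _ ⟨k, hk, rfl⟩
  have hkj : k ≠ j := fun h => hk (h ▸ hj)
  simp [transvection_smul, hkj.symm]

lemma exists_smul_single_eq {S : Finset n} {r : n} (hr : r ∈ S) {w : n → R}
    (hu : IsUnit (w r)) :
    ∃ g ∈ elementarySubgroupOn R S, g • (Pi.single r (w r) : n → R) = w := by
  have key : ∀ T : Finset n, r ∉ T → ∃ g ∈ elementarySubgroupOn R S,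
      g • (Pi.single r (w r) : n → R) = Pi.single r (w r) + ∑ k ∈ T, Pi.single k (w k) := by
    intro T
    induction T using Finset.induction_on with
    | empty => exact fun _ => ⟨1, one_mem _, by simp⟩
    | insert k T hkT ih =>
      intro hrT
      obtain ⟨hkr, hrT⟩ : k ≠ r ∧ r ∉ T := by simpa [eq_comm] using hrT
      obtain ⟨g, hg, hgw⟩ := ih hrT
      refine ⟨transvection hkr (w k * ↑hu.unit⁻¹) * g,
        mul_mem (transvection_mem_elementarySubgroupOn hkr hr _) hg, ?_⟩
      have hr' : ((Pi.single r (w r) : n → R) + ∑ k ∈ T, Pi.single k (w k)) r = w r := by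
        simp [Finset.sum_apply, Pi.single_apply, hrT]
      rw [mul_smul, hgw, transvection_smul, hr', mul_assoc, hu.val_inv_mul, mul_one,
        Finset.sum_insert hkT]
      abel
  obtain ⟨g, hg, hgw⟩ := key _ (Finset.notMem_erase r Finset.univ)
  refine ⟨g, hg, ?_⟩
  rw [hgw, Finset.add_sum_erase _ (fun k => (Pi.single k (w k) : n → R)) (Finset.mem_univ r),
    Finset.univ_sum_single]

lemma exists_smul_single_eq_single {S : Finset n} {r p : n} (hr : r ∈ S) (hp : p ∈ S)
    (hrp : r ≠ p) (u : Rˣ) :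
    ∃ g ∈ elementarySubgroupOn R S, g • (Pi.single r (u : R) : n → R) = Pi.single p 1 := by
  refine ⟨transvection hrp (-(u : R)) * transvection hrp.symm ((u⁻¹ : Rˣ) : R),
    mul_mem (transvection_mem_elementarySubgroupOn _ hp _)
      (transvection_mem_elementarySubgroupOn _ hr _), ?_⟩
  ext k
  rw [mul_smul, transvection_smul, transvection_smul]
  by_cases hkr : k = r <;> by_cases hkp : k = p <;>
    simp_all [Ne.symm hrp]

lemma exists_sum_mul_smul_single_eq_one {S : Finset n} {p : n} (hp : p ∈ S)
    {B : SpecialLinearGroup n R} (hB : ∀ k ∉ S, B • (Pi.single k 1 : n → R) = Pi.single k 1) :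
    ∃ c : n → R, ∑ k ∈ S, c k * (B • (Pi.single p 1 : n → R)) k = 1 := by
  refine ⟨fun k => (B⁻¹ : SpecialLinearGroup n R) p k, ?_⟩
  have hinv : ∀ k ∉ S, (B⁻¹ : SpecialLinearGroup n R) p k = 0 := fun k hk => by
    have h := congrFun ((inv_smul_eq_iff).2 (hB k hk).symm) p
    have hkp : p ≠ k := fun h => hk (h ▸ hp)
    simpa [SpecialLinearGroup.smul_def, hkp] using h
  have h := congrArg (fun M : SpecialLinearGroup n R => (M : Matrix n n R) p p) (inv_mul_cancel B)
  simp only [coe_mul, mul_apply, coe_one, one_apply_eq] at h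
  rw [Finset.sum_subset (Finset.subset_univ S) fun k _ hk => by simp [hinv k hk]]
  simpa [SpecialLinearGroup.smul_def] using h

end CommRing

lemma exists_mem_elementarySubgroupOn_subsingleton (S : Finset n) (v : n → ℤ) :
    ∃ g ∈ elementarySubgroupOn ℤ S, {i | i ∈ S ∧ (g • v) i ≠ 0}.Subsingleton := by
  induction h : ∑ i ∈ S, (v i).natAbs using Nat.strong_induction_on generalizing v with
  | _ N ih =>
  by_cases hv : {i | i ∈ S ∧ v i ≠ 0}.Subsingleton
  · exact ⟨1, one_mem _, by simpa using hv⟩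
  obtain ⟨i, ⟨hi, hvi⟩, j, ⟨hj, hvj⟩, hij⟩ := Set.not_subsingleton_iff.1 hv
  wlog hle : (v j).natAbs ≤ (v i).natAbs generalizing i j
  · exact this j hj hvj i hij.symm hi hvi (le_of_not_ge hle)
  -- the Euclidean step `v i ↦ v i % v j` lowers `∑ k ∈ S, |v k|`
  set t := transvection hij (-(v i / v j))
  have hti : (t • v) i = v i % v j := by
    simp only [t, transvection_smul, Pi.add_apply, Pi.single_eq_same, Int.emod_def]
    ring
  have htk : ∀ k ≠ i, (t • v) k = v k := fun k hk => by simp [t, transvection_smul, hk]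
  have hmod : (v i % v j).natAbs < (v j).natAbs := by
    have := Int.emod_lt (v i) hvj
    have := Int.emod_nonneg (v i) hvj
    omega
  have hlt : ∑ k ∈ S, ((t • v) k).natAbs < N := by
    rw [← h]
    refine Finset.sum_lt_sum (fun k _ => ?_) ⟨i, hi, hti ▸ hmod.trans_le hle⟩
    rcases eq_or_ne k i with rfl | hki
    · exact hti ▸ (hmod.trans_le hle).le
    · rw [htk k hki]
  obtain ⟨g, hg, hsub⟩ := ih _ hlt (t • v) rfl
  exact ⟨g * t, mul_mem hg (transvection_mem_elementarySubgroupOn hij hj _), by rwa [mul_smul]⟩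

lemma exists_smul_smul_single_eq_single {S : Finset n} {p : n} (hp : p ∈ S)
    {A : SpecialLinearGroup n ℤ} (hA : ∀ k ∉ S, A • (Pi.single k 1 : n → ℤ) = Pi.single k 1) :
    ∃ g ∈ elementarySubgroupOn ℤ S, g • A • (Pi.single p 1 : n → ℤ) = Pi.single p 1 := by
  obtain ⟨g₁, hg₁, hsub⟩ := exists_mem_elementarySubgroupOn_subsingleton S (A • Pi.single p 1)
  set w := g₁ • A • (Pi.single p 1 : n → ℤ) with hw
  have hB : ∀ k ∉ S, (g₁ * A) • (Pi.single k 1 : n → ℤ) = Pi.single k 1 := fun k hk => by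
    rw [mul_smul, hA k hk, smul_single_of_mem_elementarySubgroupOn hg₁ hk]
  obtain ⟨c, hc⟩ := exists_sum_mul_smul_single_eq_one hp hB
  obtain ⟨r, hr, hu⟩ := exists_isUnit_of_sum_mul_eq_one hsub (by rwa [mul_smul] at hc)
  obtain ⟨g₂, hg₂, h₂⟩ := exists_smul_single_eq hr hu
  suffices ∃ g₃ ∈ elementarySubgroupOn ℤ S, g₃ • (Pi.single r (w r) : n → ℤ) = Pi.single p 1 by
    obtain ⟨g₃, hg₃, h₃⟩ := this
    refine ⟨g₃ * g₂⁻¹ * g₁, mul_mem (mul_mem hg₃ (inv_mem hg₂)) hg₁, ?_⟩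
    rw [mul_smul, mul_smul, ← hw, ← h₂, inv_smul_smul, h₃]
  rcases ne_or_eq r p with hrp | rfl
  · simpa using exists_smul_single_eq_single hr hp hrp hu.unit
  by_cases hS : ∃ q ∈ S, q ≠ r
  · obtain ⟨q, hq, hqr⟩ := hS
    obtain ⟨g, hg, h⟩ := exists_smul_single_eq_single hr hq hqr.symm hu.unit
    obtain ⟨g', hg', h'⟩ := exists_smul_single_eq_single hq hr hqr (1 : ℤˣ)
    exact ⟨g' * g, mul_mem hg' hg, by rw [mul_smul, ← hu.unit_spec, h]; simpa using h'⟩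
  -- here `S = {r}`, so `g₂⁻¹ * g₁ * A` is diagonal and its determinant is `w r`
  push Not at hS
  have hdet := smul_single_apply_eq_one (A := g₂⁻¹ * g₁ * A) fun k hk => by
    have hkS : k ∉ S := fun h => hk (hS k h)
    rw [mul_smul, mul_smul, hA k hkS, smul_single_of_mem_elementarySubgroupOn hg₁ hkS,
      smul_single_of_mem_elementarySubgroupOn (inv_mem hg₂) hkS]
  rw [mul_smul, mul_smul, ← hw, ← h₂, inv_smul_smul, Pi.single_eq_same] at hdet
  exact ⟨1, one_mem _, by rw [one_smul, hdet]⟩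

theorem elementarySubgroup_int_eq_top : elementarySubgroup n ℤ = ⊤ := by
  suffices ∀ S : Finset n, ∀ A : SpecialLinearGroup n ℤ,
      (∀ k ∉ S, A • (Pi.single k 1 : n → ℤ) = Pi.single k 1) → A ∈ elementarySubgroup n ℤ from
    eq_top_iff.2 fun A _ => this Finset.univ A (by simp)
  intro S
  induction S using Finset.induction_on with
  | empty =>
    intro A hA
    rw [eq_one_of_smul_single fun k => hA k (Finset.notMem_empty k)]
    exact one_mem _
  | insert p S hpS ih =>
    intro A hA
    obtain ⟨g, hg, hgA⟩ := exists_smul_smul_single_eq_single (Finset.mem_insert_self p S) hA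
    have hgA' : g * A ∈ elementarySubgroup n ℤ := ih _ fun k hk => by
      rcases eq_or_ne k p with rfl | hkp
      · rwa [mul_smul]
      · have hk' : k ∉ insert p S := by simp [hkp, hk]
        rw [mul_smul, hA k hk', smul_single_of_mem_elementarySubgroupOn hg hk']
    simpa using mul_mem (inv_mem (elementarySubgroupOn_le _ hg)) hgA'

end Matrix.SpecialLinearGroup

namespace Matrix

variable {n R : Type*} [Fintype n] [DecidableEq n] [CommRing R]

variable (R) in
def permGL : Equiv.Perm n →* GL n R :=
  (permMatrixHom (R := R)).toHomUnits

lemma coe_permGL (σ : Equiv.Perm n) : (permGL R σ : Matrix n n R) = σ⁻¹.permMatrix R := rfl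

lemma det_permGL (σ : Equiv.Perm n) : det (permGL R σ : Matrix n n R) = Equiv.Perm.sign σ := by
  simp [coe_permGL]

lemma coe_permGL_finRotate (m : ℕ) [NeZero m] :
    (permGL R (finRotate m) : Matrix (Fin m) (Fin m) R) =
      of fun i j : Fin m => if (i : ℕ) = ((j : ℕ) + 1) % m then 1 else 0 := by
  ext i j
  simp only [coe_permGL, PEquiv.toMatrix_apply, Equiv.toPEquiv_apply, Option.mem_def,
    Option.some_inj, Equiv.Perm.inv_eq_iff_eq, finRotate_apply, Fin.ext_iff, Fin.val_add,
    Fin.val_one', Nat.add_mod_mod, of_apply]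

end Matrix

namespace Matrix.SpecialLinearGroup

variable {n : Type*} [Fintype n] [DecidableEq n]

section GeneralLinear

variable {R : Type*} [CommRing R]

lemma permGL_mul_toGL_transvection_mul_inv (σ : Equiv.Perm n) {i j : n} (hij : i ≠ j) (c : R) :
    permGL R σ * toGL (transvection hij c) * (permGL R σ)⁻¹ =
      toGL (transvection (σ.injective.ne hij) c) := by
  ext a b
  rw [← map_inv]
  simp only [Units.val_mul, coe_permGL, coe_GL_coe_matrix, transvection_coe, inv_inv,
    PEquiv.toMatrix_toPEquiv_mul, PEquiv.mul_toMatrix_toPEquiv]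
  simp [one_apply, single, Equiv.eq_symm_apply]

-- Phrased as `∀ h : i ≠ j, …`, membership holds vacuously for `i = j`, which makes it transitive
-- without distinctness side conditions.
lemma toGL_transvection_one_mem_of_trans {K : Subgroup (GL n R)} {i j k : n}
    (hij : ∀ h : i ≠ j, toGL (transvection h (1 : R)) ∈ K)
    (hjk : ∀ h : j ≠ k, toGL (transvection h (1 : R)) ∈ K) (hik : i ≠ k) :
    toGL (transvection hik (1 : R)) ∈ K := by
  rcases eq_or_ne i j with rfl | hij'
  · exact hjk hik
  rcases eq_or_ne j k with rfl | hjk'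
  · exact hij hik
  rw [← mul_one (1 : R), ← transvection_commutator hij' hjk', map_commutatorElement]
  exact mul_mem (mul_mem (mul_mem (hij hij') (hjk hjk')) (inv_mem (hij hij'))) (inv_mem (hjk hjk'))

lemma toGL_transvection_one_mem_of_finRotate {m : ℕ} {K : Subgroup (GL (Fin (m + 1)) R)}
    (hX : permGL R (finRotate (m + 1)) ∈ K)
    (hP : ∀ h : (0 : Fin (m + 1)) ≠ 1, toGL (transvection h (1 : R)) ∈ K)
    {i j : Fin (m + 1)} (hij : i ≠ j) : toGL (transvection hij (1 : R)) ∈ K := by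
  have hshift : ∀ i j : Fin (m + 1), (∀ h : i ≠ j, toGL (transvection h (1 : R)) ∈ K) →
      ∀ h : i + 1 ≠ j + 1, toGL (transvection h (1 : R)) ∈ K := by
    intro i j hij h
    have h' : i ≠ j := fun e => h (congrArg (· + 1) e)
    have := permGL_mul_toGL_transvection_mul_inv (R := R) (finRotate (m + 1)) h' 1
    simp only [finRotate_apply] at this
    rw [← this]
    exact mul_mem (mul_mem hX (hij h')) (inv_mem hX)
  have hsucc : ∀ i : Fin (m + 1), ∀ h : i ≠ i + 1, toGL (transvection h (1 : R)) ∈ K := by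
    intro i
    induction i using Fin.induction with
    | zero => simpa using hP
    | succ i ih => simpa [Fin.coeSucc_eq_succ] using hshift _ _ ih
  have hadd : ∀ d : Fin (m + 1), ∀ h : i ≠ i + d, toGL (transvection h (1 : R)) ∈ K := by
    intro d
    induction d using Fin.induction with
    | zero => simp
    | succ d ih =>
      rw [← Fin.coeSucc_eq_succ, ← add_assoc]
      exact toGL_transvection_one_mem_of_trans ih (hsucc _)
  simpa using hadd (j - i) (by simpa using hij)

end GeneralLinear

lemma transvection_int_eq_zpow {i j : n} (hij : i ≠ j) (c : ℤ) :
    transvection hij c = transvection hij 1 ^ c := by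
  induction c using Int.induction_on with
  | zero => simp
  | succ c ih => rw [_root_.zpow_add_one, ← ih, ← transvection_add]
  | pred c ih =>
    rw [_root_.zpow_sub_one, ← ih, transvection_inv, ← transvection_add, sub_eq_add_neg]

theorem eq_top_of_transvection_mem_of_det_eq_neg_one {K : Subgroup (GL n ℤ)}
    (hT : ∀ {i j : n} (h : i ≠ j), toGL (transvection h (1 : ℤ)) ∈ K) {x : GL n ℤ} (hx : x ∈ K)
    (hdet : det (x : Matrix n n ℤ) = -1) : K = ⊤ := by
  have hSL : elementarySubgroup n ℤ ≤ K.comap toGL := by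
    refine (Subgroup.closure_le _).2 ?_
    rintro _ ⟨⟨i, j, h, c⟩, rfl⟩
    rw [SetLike.mem_coe, Subgroup.mem_comap, TransvectionStruct.toSpecialLinearGroup_mk,
      transvection_int_eq_zpow, map_zpow]
    exact zpow_mem (hT h) c
  have hmem (g : GL n ℤ) (hg : det (g : Matrix n n ℤ) = 1) : g ∈ K := by
    have h : toGL ⟨g, hg⟩ ∈ K := hSL (by rw [elementarySubgroup_int_eq_top]; trivial)
    rwa [show toGL ⟨g, hg⟩ = g from Units.ext rfl] at h
  refine eq_top_iff.2 fun g _ => ?_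
  rcases Int.isUnit_iff.1 (isUnits_det_units g) with hg | hg
  · exact hmem g hg
  · have hxg : det ((x⁻¹ * g : GL n ℤ) : Matrix n n ℤ) = 1 := by
      have hinv : det ((x⁻¹ : GL n ℤ) : Matrix n n ℤ) * det (x : Matrix n n ℤ) = 1 := by
        rw [← det_mul, ← Units.val_mul, inv_mul_cancel, Units.val_one, det_one]
      rw [Units.val_mul, det_mul, hg]
      rw [hdet] at hinv
      linarith
    simpa using mul_mem hx (hmem _ hxg)

theorem closure_permGL_finRotate_transvection_eq_top {m : ℕ} (hm : Odd m)
    (h : (0 : Fin (m + 1)) ≠ 1) :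
    Subgroup.closure {permGL ℤ (finRotate (m + 1)), toGL (transvection h (1 : ℤ))} = ⊤ := by
  have hX : permGL ℤ (finRotate (m + 1)) ∈ Subgroup.closure
      {permGL ℤ (finRotate (m + 1)), toGL (transvection h (1 : ℤ))} :=
    Subgroup.subset_closure (by simp)
  refine eq_top_of_transvection_mem_of_det_eq_neg_one
    (toGL_transvection_one_mem_of_finRotate hX fun _ => Subgroup.subset_closure (by simp)) hX ?_
  rw [det_permGL, sign_finRotate]
  simp [hm.neg_one_pow]

end Matrix.SpecialLinearGroup

open Matrix.SpecialLinearGroup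

/-- Hua–Reiner, even case: for even positive `m`, `GL_m(ℤ)` is generated
by the cyclic permutation matrix `X` (with `X i j = 1` iff `i ≡ j + 1 (mod m)`) and
`P = I_m + E₁₂`. -/
theorem stmt_12 (m : ℕ) (hm : 0 < m) (heven : Even m) :
    Subgroup.closure {g : GL (Fin m) ℤ |
      (g : Matrix (Fin m) (Fin m) ℤ) =
          Matrix.of (fun i j : Fin m => if (i : ℕ) = ((j : ℕ) + 1) % m then 1 else 0) ∨
      (g : Matrix (Fin m) (Fin m) ℤ) =
          1 + Matrix.single (⟨0, hm⟩ : Fin m)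
              (⟨1, by rcases heven with ⟨k, rfl⟩; omega⟩ : Fin m) 1} = ⊤ := by
  obtain ⟨k, rfl⟩ : ∃ k, m = k + 1 := ⟨m - 1, by omega⟩
  have hk : Odd k := by obtain ⟨a, ha⟩ := heven; exact ⟨a - 1, by omega⟩
  have h01 : (0 : Fin (k + 1)) ≠ 1 := by simp [Fin.ext_iff, Nat.mod_eq_of_lt, hk.pos]
  convert closure_permGL_finRotate_transvection_eq_top hk h01 using 2
  ext g
  simp only [Set.mem_ofPred_eq, Set.mem_insert_iff, Set.mem_singleton_iff, Units.ext_iff,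
    coe_permGL_finRotate, coe_GL_coe_matrix, transvection_coe]
  rw [show (⟨1, _⟩ : Fin (k + 1)) = 1 from Fin.ext (Nat.mod_eq_of_lt (by omega)).symm]
  rfl
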